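/- arXiv:2212.03046 — 4 statements merged into one kernel-verified Lean document; each statement's English description precedes it below -/
import Mathlib

section
/- Let L₁ and L₂ be finitely generated free abelian groups and let ψ : L₁ ⊗ ℚ → L₂ ⊗ ℚ be an injective ℚ-linear map that is represented by an element of Hom(L₁, L₂) ⊗ ℚ. Then there exists a positive integer d such that for every positive integer N and every h ∈ L₁ with (1/N)·ψ(h) ∈ L₂ (inside L₂ ⊗ ℚ), one has h ∈ (N/d)·L₁, i.e., d·h ∈ N·L₁. -/
/-- For an injective ℚ-linear map `ψ : L₁ ⊗ ℚ → L₂ ⊗ ℚ` between rationalized lattices,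
there is a positive integer `d` such that whenever `(1/N)·ψ(h)` lies in the lattice `L₂`,
one has `d·h ∈ N·L₁`. -/
theorem stmt_5 (n m : ℕ) (ψ : (Fin n → ℚ) →ₗ[ℚ] (Fin m → ℚ))
    (hψ : Function.Injective ψ) :
    ∃ d : ℕ, 0 < d ∧ ∀ N : ℕ, 0 < N → ∀ h : Fin n → ℤ,
      (∃ h₂ : Fin m → ℤ, (N : ℚ)⁻¹ • ψ (fun j => (h j : ℚ)) = fun j => (h₂ j : ℚ)) →
      ∃ h₁ : Fin n → ℤ, (d : ℤ) • h = (N : ℤ) • h₁ := by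
  classical
  obtain ⟨φ, hφ⟩ := LinearMap.exists_leftInverse_of_injective ψ (LinearMap.ker_eq_bot.mpr hψ)
  have hcomp : ∀ x, φ (ψ x) = x := fun x => congrFun (congrArg DFunLike.coe hφ) x
  set a : Fin m → Fin n → ℚ := fun i j => φ (fun k => if i = k then 1 else 0) j with ha
  set d : ℕ := ∏ i, ∏ j, (a i j).den with hd
  have hdpos : 0 < d :=
    Finset.prod_pos fun i _ => Finset.prod_pos fun j _ => (a i j).pos
  have hden : ∀ i j, (a i j).den ∣ d := fun i j =>
    dvd_trans (Finset.dvd_prod_of_mem (fun j => (a i j).den) (Finset.mem_univ j))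
      (Finset.dvd_prod_of_mem (fun i => ∏ j, (a i j).den) (Finset.mem_univ i))
  have hda : ∀ i j, ((d : ℚ) * a i j) ∈ (algebraMap ℤ ℚ).range := by
    intro i j
    obtain ⟨c, hc⟩ := hden i j
    refine ⟨c * (a i j).num, ?_⟩
    have : ((d : ℚ)) = ((a i j).den : ℚ) * c := by exact_mod_cast congrArg (Nat.cast (R := ℚ)) hc
    rw [this]
    push_cast
    rw [mul_comm ((a i j).den : ℚ) (c : ℚ), mul_assoc, mul_comm ((a i j).den : ℚ) (a i j),
      Rat.mul_den_eq_num]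
    simp only [eq_intCast]
  have key : ∀ (v : Fin m → ℤ) (j : Fin n),
      ∃ z : ℤ, (d : ℚ) * φ (fun i => (v i : ℚ)) j = z := by
    intro v j
    have hexp : (fun i => (v i : ℚ)) = ∑ i, (v i : ℚ) • fun k => if i = k then (1:ℚ) else 0 :=
      pi_eq_sum_univ _
    have hmem : (d : ℚ) * φ (fun i => (v i : ℚ)) j ∈ (algebraMap ℤ ℚ).range := by
      rw [hexp, map_sum]
      have : (∑ i, φ ((v i : ℚ) • fun k => if i = k then (1:ℚ) else 0)) j
          = ∑ i, (v i : ℚ) * a i j := by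
        rw [Finset.sum_apply]
        refine Finset.sum_congr rfl fun i _ => ?_
        rw [map_smul]
        rfl
      rw [this, Finset.mul_sum]
      refine Subring.sum_mem _ fun i _ => ?_
      have : (d : ℚ) * ((v i : ℚ) * a i j) = (v i : ℚ) * ((d : ℚ) * a i j) := by ring
      rw [this]
      exact Subring.mul_mem _ ⟨v i, rfl⟩ (hda i j)
    obtain ⟨z, hz⟩ := hmem
    exact ⟨z, hz.symm⟩
  refine ⟨d, hdpos, fun N hN h ⟨h₂, heq⟩ => ?_⟩
  have hNQ : (N : ℚ) ≠ 0 := by exact_mod_cast hN.ne'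
  have hψh : ψ (fun j => (h j : ℚ)) = (N : ℚ) • fun j => (h₂ j : ℚ) := by
    rw [← heq, smul_smul, mul_inv_cancel₀ hNQ, one_smul]
  have hh : (fun j => (h j : ℚ)) = (N : ℚ) • φ (fun j => (h₂ j : ℚ)) := by
    rw [← map_smul, ← hψh, hcomp]
  refine ⟨fun i => (key h₂ i).choose, funext fun i => ?_⟩
  have hzi := (key h₂ i).choose_spec
  have hhi : (h i : ℚ) = (N : ℚ) * φ (fun j => (h₂ j : ℚ)) i := congrFun hh i
  have : ((d : ℤ) * h i : ℚ) = ((N : ℤ) * (key h₂ i).choose : ℚ) := by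
    push_cast
    rw [hhi, ← hzi]
    ring
  exact_mod_cast this
end

section
/- Let H be a free ℤ-module of finite rank with a unimodular symmetric (or skew-symmetric) bilinear form, and let H₁ ⊆ H be a primitive sublattice such that the restriction of the form to H₁ has even discriminant (e.g., the restricted Gram matrix is 4 times a unimodular form). If φ : H → H is a ℤ-linear endomorphism preserving the form that acts as λ·id on H₁ and as 0 on the orthogonal complement H₁⊥, and H₁ ⊕ H₁⊥ has finite index in H, then λ is even. -/
/-!
Write `k • z = x + y` with `x ∈ H₁` and `y ⊥ H₁`. Then `k • φ z = lam • x`, so `φ z ∈ H₁` by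
primitivity, and `ω w (φ z) = lam * ω w z` for `w ∈ H₁`. The left side lies in `4ℤ`, so if `lam`
were odd, every functional `ω w` with `w ∈ H₁` would be even; by unimodularity `w = 2 • u`, and
`u ∈ H₁` by primitivity. Thus `H₁` would be `2`-divisible, which forces `ω w = 0` on `H₁`,
contradicting nondegeneracy.
-/

theorem LinearMap.exists_eq_smul_of_forall_dvd {M : Type*} [AddCommGroup M] [Module ℤ M]
    (f : M →ₗ[ℤ] ℤ) (d : ℤ) (h : ∀ x, d ∣ f x) : ∃ g : M →ₗ[ℤ] ℤ, f = d • g := by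
  refine ⟨{ toFun := fun x => f x / d, map_add' := ?_, map_smul' := ?_ }, ?_⟩
  · intro x y
    rw [map_add, Int.add_ediv_of_dvd_right (h y)]
  · intro c x
    simp only [map_smul, smul_eq_mul, RingHom.id_apply]
    exact Int.mul_ediv_assoc c (h x)
  · ext x
    exact (Int.mul_ediv_cancel' (h x)).symm

theorem Int.eq_zero_of_forall_two_pow_dvd {a : ℤ} (h : ∀ n : ℕ, 2 ^ n ∣ a) : a = 0 :=
  Int.eq_zero_of_dvd_of_natAbs_lt_natAbs (h a.natAbs) (by simpa using Nat.lt_two_pow_self)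

namespace LinearMap.BilinForm

variable {H : Type*} [AddCommGroup H] [Module ℤ H] {ω : LinearMap.BilinForm ℤ H}

theorem exists_eq_smul_of_forall_dvd (hω : Function.Bijective ω) {d : ℤ} {w : H}
    (h : ∀ z, d ∣ ω w z) : ∃ v, w = d • v := by
  obtain ⟨g, hg⟩ := (ω w).exists_eq_smul_of_forall_dvd d h
  obtain ⟨v, rfl⟩ := hω.2 g
  exact ⟨v, hω.1 (by rw [hg, map_zsmul])⟩

theorem eq_bot_of_forall_exists_two_smul (hω : Function.Injective ω) {S : Submodule ℤ H}
    (hS : ∀ w ∈ S, ∃ u ∈ S, w = (2 : ℤ) • u) : S = ⊥ := by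
  have hpow : ∀ n : ℕ, ∀ w ∈ S, ∃ u ∈ S, w = (2 : ℤ) ^ n • u := by
    intro n
    induction n with
    | zero => exact fun w hw => ⟨w, hw, by simp⟩
    | succ n ih =>
      intro w hw
      obtain ⟨u, hu, rfl⟩ := hS w hw
      obtain ⟨v, hv, rfl⟩ := ih u hu
      exact ⟨v, hv, by rw [smul_smul, pow_succ']⟩
  refine (Submodule.eq_bot_iff S).2 fun w hw => hω ?_
  ext z
  rw [map_zero, LinearMap.zero_apply]
  refine Int.eq_zero_of_forall_two_pow_dvd fun n => ?_
  obtain ⟨u, -, rfl⟩ := hpow n w hw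
  simp

variable {H₁ : Submodule ℤ H} {φ : H →ₗ[ℤ] H} {lam : ℤ}

theorem smul_apply_eq_of_add_mem_orthogonal (hrefl : ω.IsRefl)
    (hφ1 : ∀ x ∈ H₁, φ x = lam • x) (hφ2 : ∀ y : H, (∀ x ∈ H₁, ω y x = 0) → φ y = 0)
    {k : ℤ} {z x y : H} (hx : x ∈ H₁) (hy : y ∈ ω.orthogonal H₁) (hxy : k • z = x + y) :
    k • φ z = lam • x := by
  have hφy : φ y = 0 := hφ2 y fun n hn => hrefl n y (hy n hn)
  rw [← map_zsmul, hxy, map_add, hφ1 x hx, hφy, add_zero]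

theorem apply_mem_and_apply_apply_eq_mul (hrefl : ω.IsRefl)
    (hprim : ∀ (n : ℤ) (x : H), n ≠ 0 → n • x ∈ H₁ → x ∈ H₁)
    (hφ1 : ∀ x ∈ H₁, φ x = lam • x) (hφ2 : ∀ y : H, (∀ x ∈ H₁, ω y x = 0) → φ y = 0)
    (hfin : ∀ z : H, ∃ k : ℤ, k ≠ 0 ∧ k • z ∈ H₁ ⊔ ω.orthogonal H₁) (z : H) :
    φ z ∈ H₁ ∧ ∀ w ∈ H₁, ω w (φ z) = lam * ω w z := by
  obtain ⟨k, hk, hkz⟩ := hfin z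
  obtain ⟨x, hx, y, hy, hxy⟩ := Submodule.mem_sup.1 hkz
  have hkφ := smul_apply_eq_of_add_mem_orthogonal hrefl hφ1 hφ2 hx hy hxy.symm
  refine ⟨hprim k _ hk (hkφ ▸ H₁.toAddSubgroup.zsmul_mem hx lam), fun w hw => ?_⟩
  refine mul_left_cancel₀ hk ?_
  calc k * ω w (φ z) = lam * ω w x := by
        simpa only [map_zsmul, smul_eq_mul] using congrArg (ω w) hkφ
    _ = k * (lam * ω w z) := by
        have := congrArg (ω w) hxy
        simp only [map_zsmul, map_add, smul_eq_mul, hy w hw, add_zero] at this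
        rw [this]; ring

end LinearMap.BilinForm

open LinearMap.BilinForm in
theorem stmt_6_general (H : Type*) [AddCommGroup H] [Module ℤ H]
    (ω : LinearMap.BilinForm ℤ H) (hω : Function.Bijective ω)
    (hsym : ω.IsSymm ∨ ω.IsAlt)
    (H₁ : Submodule ℤ H) (hne : H₁ ≠ ⊥)
    (hprim : ∀ (n : ℤ) (x : H), n ≠ 0 → n • x ∈ H₁ → x ∈ H₁)
    (B₁ : LinearMap.BilinForm ℤ H₁)
    (hres : ∀ x y : H₁, ω (x : H) (y : H) = 4 * B₁ x y)
    (lam : ℤ) (φ : H →ₗ[ℤ] H)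
    (hφ1 : ∀ x ∈ H₁, φ x = lam • x)
    (hφ2 : ∀ y : H, (∀ x ∈ H₁, ω y x = 0) → φ y = 0)
    (hfin : ∀ z : H, ∃ k : ℤ, k ≠ 0 ∧ k • z ∈ H₁ ⊔ ω.orthogonal H₁) :
    2 ∣ lam := by
  have hrefl : ω.IsRefl := hsym.elim IsSymm.isRefl IsAlt.isRefl
  by_contra hodd
  have heven : ∀ w ∈ H₁, ∀ z, 2 ∣ ω w z := by
    intro w hw z
    obtain ⟨hφz, hφω⟩ := apply_mem_and_apply_apply_eq_mul hrefl hprim hφ1 hφ2 hfin z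
    have h4 : (4 : ℤ) ∣ lam * ω w z := ⟨_, (hφω w hw).symm.trans (hres ⟨w, hw⟩ ⟨_, hφz⟩)⟩
    exact (Int.prime_two.dvd_mul.1 (dvd_trans ⟨2, rfl⟩ h4)).resolve_left hodd
  refine hne (eq_bot_of_forall_exists_two_smul hω.1 fun w hw => ?_)
  obtain ⟨u, rfl⟩ := exists_eq_smul_of_forall_dvd hω (heven w hw)
  exact ⟨u, hprim 2 u two_ne_zero hw, rfl⟩

/-- Parity lemma: if `H` is a unimodular lattice, `H₁ ⊆ H` a nonzero primitive sublattice
on which the form restricts to `4` times a unimodular pairing, and `φ : H → H` acts as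
`λ·id` on `H₁` and as `0` on `H₁⊥`, with `H₁ ⊕ H₁⊥` of finite index in `H`, then `λ` is even. -/
theorem stmt_6 (H : Type*) [AddCommGroup H] [Module ℤ H]
    [Module.Free ℤ H] [Module.Finite ℤ H]
    (ω : LinearMap.BilinForm ℤ H) (hω : Function.Bijective ω)
    (hsym : ω.IsSymm ∨ ω.IsAlt)
    (H₁ : Submodule ℤ H) (hne : H₁ ≠ ⊥)
    (hprim : ∀ (n : ℤ) (x : H), n ≠ 0 → n • x ∈ H₁ → x ∈ H₁)
    (B₁ : LinearMap.BilinForm ℤ H₁) (hB₁ : Function.Bijective B₁)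
    (hres : ∀ x y : H₁, ω (x : H) (y : H) = 4 * B₁ x y)
    (lam : ℤ) (φ : H →ₗ[ℤ] H)
    (hφ1 : ∀ x ∈ H₁, φ x = lam • x)
    (hφ2 : ∀ y : H, (∀ x ∈ H₁, ω y x = 0) → φ y = 0)
    (hfin : ∀ z : H, ∃ k : ℤ, k ≠ 0 ∧ k • z ∈ H₁ ⊔ ω.orthogonal H₁) :
    2 ∣ lam :=
  stmt_6_general H ω hω hsym H₁ hne hprim B₁ hres lam φ hφ1 hφ2 hfin
end

section
/- Let H be a lattice with a unimodular bilinear form, and H₁ ⊂ H a sublattice with H₁ ⊕ H₁⊥ of finite index in H. If an endomorphism of H acts as λ times the orthogonal projection onto H₁ (λ ∈ ℚ) and maps H to H, and H₁ is primitive in H, then λ ∈ ℤ. -/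
/-! If `λ = a / D` in lowest terms, then `D • φ x = a • x` for `x ∈ H₁`, and since `a` is
invertible modulo `D`, every `x ∈ H₁` is `D` times an element of `H`, which lies in `H₁` by
primitivity. So `H₁` is `D`-divisible, and its elements have coordinates divisible by every power
of `D`; for `D ≠ 1` this forces `H₁ = 0`. -/

theorem exists_smul_eq_of_smul_eq_smul_of_isCoprime {R M : Type*} [CommRing R]
    [AddCommGroup M] [Module R M] {a b : R} (hab : IsCoprime a b) {x y : M}
    (h : a • y = b • x) : ∃ z, a • z = x := by
  obtain ⟨u, v, huv⟩ := hab
  refine ⟨u • x + v • y, ?_⟩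
  linear_combination (norm := module) v • h + huv • x

section Free

variable {R M : Type*} [CommRing R] [IsDomain R] [WfDvdMonoid R]
  [AddCommGroup M] [Module R M] [Module.Free R M]

theorem Module.Free.eq_zero_of_forall_exists_pow_smul_eq {a : R} (ha : ¬IsUnit a) {x : M}
    (hx : ∀ n : ℕ, ∃ y, a ^ n • y = x) : x = 0 := by
  let b := Module.Free.chooseBasis R M
  refine b.repr.injective (Finsupp.ext fun i => ?_)
  rw [map_zero, Finsupp.zero_apply]
  by_contra hi
  obtain ⟨n, hn⟩ := FiniteMultiplicity.of_not_isUnit ha hi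
  obtain ⟨y, rfl⟩ := hx (n + 1)
  exact hn ⟨b.repr y i, by simp⟩

theorem Submodule.eq_bot_of_forall_exists_smul_eq {N : Submodule R M} {a : R}
    (ha : ¬IsUnit a) (hN : ∀ x ∈ N, ∃ y ∈ N, a • y = x) : N = ⊥ := by
  have hpow : ∀ n : ℕ, ∀ x ∈ N, ∃ y ∈ N, a ^ n • y = x := by
    intro n
    induction n with
    | zero => exact fun x hx => ⟨x, hx, by rw [pow_zero, one_smul]⟩
    | succ n ih =>
      intro x hx
      obtain ⟨y, hy, rfl⟩ := ih x hx
      obtain ⟨z, hz, rfl⟩ := hN y hy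
      exact ⟨z, hz, by rw [pow_succ, mul_smul]⟩
  refine (Submodule.eq_bot_iff N).mpr fun x hx =>
    Module.Free.eq_zero_of_forall_exists_pow_smul_eq ha fun n => ?_
  obtain ⟨y, -, hy⟩ := hpow n x hx
  exact ⟨y, hy⟩

end Free

theorem Rat.isCoprime_den_num (q : ℚ) : IsCoprime (q.den : ℤ) q.num := by
  rw [Int.isCoprime_iff_gcd_eq_one, Int.gcd_comm]
  exact q.reduced

theorem stmt_7_general (H : Type*) [AddCommGroup H] [Module ℤ H]
    [Module.Free ℤ H]
    (H₁ : Submodule ℤ H) (hne : H₁ ≠ ⊥)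
    (hprim : ∀ (n : ℤ) (x : H), n ≠ 0 → n • x ∈ H₁ → x ∈ H₁)
    (lam : ℚ) (φ : H →ₗ[ℤ] H)
    (hφ1 : ∀ x ∈ H₁, (lam.den : ℤ) • φ x = lam.num • x) :
    ∃ m : ℤ, lam = m := by
  -- The `•` in the hypotheses is `zsmul`, not the action of the `Module ℤ H` argument.
  obtain rfl : ‹Module ℤ H› = AddCommGroup.toIntModule H := Subsingleton.elim _ _
  refine ⟨lam.num, ((Rat.den_eq_one_iff lam).mp ?_).symm⟩
  by_contra hden
  have hunit : ¬IsUnit (lam.den : ℤ) := by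
    rwa [Int.isUnit_iff_natAbs_eq, Int.natAbs_natCast]
  have hdiv : ∀ x ∈ H₁, ∃ y ∈ H₁, (lam.den : ℤ) • y = x := by
    intro x hx
    obtain ⟨y, rfl⟩ :=
      exists_smul_eq_of_smul_eq_smul_of_isCoprime lam.isCoprime_den_num (hφ1 x hx)
    exact ⟨y, hprim _ y (by exact_mod_cast lam.den_nz) hx, rfl⟩
  exact hne (Submodule.eq_bot_of_forall_exists_smul_eq hunit hdiv)

/-- If an endomorphism of a unimodular lattice `H` acts as `λ` times the orthogonal
projection onto a nonzero primitive sublattice `H₁` (with `λ ∈ ℚ`, and `H₁ ⊕ H₁⊥` of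
finite index in `H`), then `λ ∈ ℤ`. -/
theorem stmt_7 (H : Type*) [AddCommGroup H] [Module ℤ H]
    [Module.Free ℤ H] [Module.Finite ℤ H]
    (ω : LinearMap.BilinForm ℤ H) (hω : Function.Bijective ω)
    (H₁ : Submodule ℤ H) (hne : H₁ ≠ ⊥)
    (hprim : ∀ (n : ℤ) (x : H), n ≠ 0 → n • x ∈ H₁ → x ∈ H₁)
    (lam : ℚ) (φ : H →ₗ[ℤ] H)
    (hφ1 : ∀ x ∈ H₁, (lam.den : ℤ) • φ x = lam.num • x)
    (hφ2 : ∀ y : H, (∀ x ∈ H₁, ω y x = 0) → φ y = 0)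
    (hfin : ∀ z : H, ∃ k : ℤ, k ≠ 0 ∧ k • z ∈ H₁ ⊔ ω.orthogonal H₁) :
    ∃ m : ℤ, lam = m :=
  stmt_7_general H H₁ hne hprim lam φ hφ1
end

section
/- Let M be the group of vectors (α₀,…,α_{2g}) ∈ ℚ^{2g+1} such that Σ_k α_k i^k ∈ ℤ and Σ_k α_k i^{2g−k} ∈ ℤ for all integers i ≥ 0. Then M is a free ℤ-module of rank 2g+1 containing ℤ^{2g+1} as a subgroup of finite index. -/
/-! The conditions at `i = 0, …, 2g` alone say that `V α` is integral, where `V` is the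
Vandermonde matrix of `0, …, 2g`; its determinant is the superfactorial `sf (2g)`, so by
Cramer's rule `sf (2g) • M ⊆ ℤ^{2g+1} ⊆ M`. Hence `M` is finitely generated and spans
`ℚ^{2g+1}`, i.e. it is a lattice, and lattices over a PID are free of full rank. -/

open Matrix

theorem Nat.superFactorial_pos (n : ℕ) : 0 < n.superFactorial := by
  rw [← Nat.prod_range_factorial_succ]
  exact Finset.prod_pos fun _ _ => Nat.factorial_pos _

theorem Matrix.det_smul_eq_of_mulVec_eq {R K ι : Type*} [CommRing R] [CommRing K] [Algebra R K]
    [Fintype ι] [DecidableEq ι] (A : Matrix ι ι R) {x : ι → K} {b : ι → R}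
    (h : A.map (algebraMap R K) *ᵥ x = algebraMap R K ∘ b) :
    A.det • x = algebraMap R K ∘ (A.adjugate *ᵥ b) := by
  set f := algebraMap R K
  have hadj : (A.map f).adjugate * A.map f = f A.det • 1 := by
    rw [adjugate_mul, f.map_det]; rfl
  funext i
  calc (A.det • x) i = ((A.map f).adjugate *ᵥ (A.map f *ᵥ x)) i := by
        rw [mulVec_mulVec, hadj, smul_mulVec, one_mulVec, algebraMap_smul]
    _ = f ((A.adjugate *ᵥ b) i) := by
        rw [h, f.map_mulVec]
        exact congrArg (fun B => (B *ᵥ f ∘ b) i) (f.map_adjugate A).symm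

theorem exists_superFactorial_mul_eq_algebraMap_of_forall_sum_mul_pow_eq
    {R K : Type*} [CommRing R] [CommRing K] [Algebra R K] {n : ℕ} {α : Fin (n + 1) → K}
    (h : ∀ i : Fin (n + 1), ∃ m : R, ∑ k, α k * (i : K) ^ (k : ℕ) = algebraMap R K m)
    (k : Fin (n + 1)) : ∃ m : R, (n.superFactorial : K) * α k = algebraMap R K m := by
  choose b hb using h
  have hV : (vandermonde fun i : Fin (n + 1) => (i : R)).map (algebraMap R K) *ᵥ α =
      algebraMap R K ∘ b := by
    funext i
    simp [← hb i, mulVec, dotProduct, vandermonde_apply, mul_comm]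
  refine ⟨((vandermonde fun i : Fin (n + 1) => (i : R)).adjugate *ᵥ b) k, ?_⟩
  rw [← Function.comp_apply (f := algebraMap R K), ← congrFun (det_smul_eq_of_mulVec_eq _ hV) k,
    det_vandermonde_id_eq_superFactorial]
  simp [Nat.cast_smul_eq_nsmul, nsmul_eq_mul]

theorem Submodule.IsLattice.of_algebraMap_mem_of_bounded_denominators
    {R K ι : Type*} [CommRing R] [IsNoetherianRing R] [Field K] [Algebra R K] [FaithfulSMul R K]
    [Fintype ι] {M : Submodule R (ι → K)}
    (hint : ∀ v : ι → R, (fun k => algebraMap R K (v k)) ∈ M) {d : R} (hd : d ≠ 0)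
    (hden : ∀ x ∈ M, ∀ k, ∃ m : R, algebraMap R K d * x k = algebraMap R K m) :
    M.IsLattice K where
  fg := by
    let castVec := (Algebra.linearMap R K).compLeft ι
    have hle : M.map (d • LinearMap.id) ≤ LinearMap.range castVec := by
      rintro _ ⟨x, hx, rfl⟩
      choose m hm using hden x hx
      exact ⟨m, funext fun k => by simp [castVec, ← hm, Algebra.smul_def]⟩
    have hinj : Function.Injective (d • LinearMap.id : (ι → K) →ₗ[R] ι → K) := by
      have had : algebraMap R K d ≠ 0 := by
        simpa using (FaithfulSMul.algebraMap_injective R K).ne hd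
      intro x y hxy
      simp only [LinearMap.smul_apply, LinearMap.id_apply, ← algebraMap_smul K d x,
        ← algebraMap_smul K d y] at hxy
      exact smul_right_injective _ had hxy
    have : IsNoetherian R (M.map (d • LinearMap.id)) := isNoetherian_of_le hle
    exact Submodule.fg_of_fg_map_injective _ hinj (Module.Finite.iff_fg.mp inferInstance)
  span_eq_top := by
    classical
    refine eq_top_iff.mpr ((Pi.basisFun K ι).span_eq.ge.trans (Submodule.span_le.mpr ?_))
    rintro _ ⟨k, rfl⟩
    refine Submodule.subset_span (SetLike.mem_coe.mpr ?_)
    convert hint (Pi.single k 1) using 1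
    funext j
    by_cases hj : j = k <;> simp [hj]

theorem stmt_12_general (g : ℕ)
    (M : Submodule ℤ (Fin (2 * g + 1) → ℚ))
    (hM : ∀ α : Fin (2 * g + 1) → ℚ, α ∈ M ↔
      ∀ i : ℕ, (∃ m : ℤ, ∑ k : Fin (2 * g + 1), α k * (i : ℚ) ^ (k : ℕ) = m) ∧
        (∃ m : ℤ, ∑ k : Fin (2 * g + 1), α k * (i : ℚ) ^ (2 * g - (k : ℕ)) = m)) :
    Module.Free ℤ M ∧ Module.finrank ℤ M = 2 * g + 1 ∧
    (∀ v : Fin (2 * g + 1) → ℤ, (fun k => (v k : ℚ)) ∈ M) ∧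
    (∃ D : ℕ, 0 < D ∧ ∀ α ∈ M, ∀ k, ∃ m : ℤ, (D : ℚ) * α k = m) := by
  have hint : ∀ v : Fin (2 * g + 1) → ℤ, (fun k => (v k : ℚ)) ∈ M := fun v =>
    (hM _).mpr fun i =>
      ⟨⟨∑ k, v k * (i : ℤ) ^ (k : ℕ), by push_cast; rfl⟩,
        ⟨∑ k, v k * (i : ℤ) ^ (2 * g - (k : ℕ)), by push_cast; rfl⟩⟩
  have hden : ∀ α ∈ M, ∀ k, ∃ m : ℤ, ((2 * g).superFactorial : ℚ) * α k = m := by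
    intro α hα
    simpa using exists_superFactorial_mul_eq_algebraMap_of_forall_sum_mul_pow_eq (R := ℤ)
      (α := α) fun i => by simpa using ((hM α).mp hα i).1
  have : M.IsLattice ℚ := .of_algebraMap_mem_of_bounded_denominators (by simpa using hint)
    (Nat.cast_ne_zero.mpr (Nat.superFactorial_pos (2 * g)).ne') (by simpa using hden)
  exact ⟨inferInstance, by simpa using Submodule.IsLattice.finrank_of_pi ℚ M, hint,
    _, Nat.superFactorial_pos _, hden⟩

/-- The group `M` of rational vectors `(α₀,…,α_{2g})` such that `Σ_k α_k i^k ∈ ℤ` and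
`Σ_k α_k i^{2g-k} ∈ ℤ` for all natural numbers `i` is a free ℤ-module of rank `2g+1`
containing `ℤ^{2g+1}` as a subgroup of finite index. -/
theorem stmt_12 (g : ℕ) (hg : 1 ≤ g)
    (M : Submodule ℤ (Fin (2 * g + 1) → ℚ))
    (hM : ∀ α : Fin (2 * g + 1) → ℚ, α ∈ M ↔
      ∀ i : ℕ, (∃ m : ℤ, ∑ k : Fin (2 * g + 1), α k * (i : ℚ) ^ (k : ℕ) = m) ∧
        (∃ m : ℤ, ∑ k : Fin (2 * g + 1), α k * (i : ℚ) ^ (2 * g - (k : ℕ)) = m)) :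
    Module.Free ℤ M ∧ Module.finrank ℤ M = 2 * g + 1 ∧
    (∀ v : Fin (2 * g + 1) → ℤ, (fun k => (v k : ℚ)) ∈ M) ∧
    (∃ D : ℕ, 0 < D ∧ ∀ α ∈ M, ∀ k, ∃ m : ℤ, (D : ℚ) * α k = m) :=
  stmt_12_general g M hM
end
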